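/- arXiv:1806.02107 — 4 statements merged into one kernel-verified Lean document; each statement's English description precedes it below -/
import Mathlib

section
/- Let E ⊂ ℝ^d be a bounded convex set with nonempty interior and Φ a positive measure with supp(Φ) = E. Let 0 < γ ≤ η. Then there exists c > 0 such that for all x, y ∈ E, Φ(B(x, η) ∩ B(y, γ)) ≥ c · 1_{y ∈ B(x, η + γ/4)}. -/
open MeasureTheory Metric
open scoped ENNReal

theorem exists_mem_segment_dist_le {V : Type*} [NormedAddCommGroup V] [NormedSpace ℝ V]
    {x y : V} {a b : ℝ} (ha : 0 ≤ a) (hb : 0 ≤ b) (hxy : dist x y ≤ a + b) :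
    ∃ m ∈ segment ℝ x y, dist m x ≤ a ∧ dist m y ≤ b := by
  -- If `a + b = 0`, the junk value `t = 0` still works because then `a = 0`.
  set t := a / (a + b)
  have ht₀ : 0 ≤ t := by positivity
  have ht₁ : t ≤ 1 := div_le_one_of_le₀ (by linarith) (by positivity)
  have hta : t * (a + b) = a := div_mul_cancel_of_imp fun h => by linarith
  refine ⟨AffineMap.lineMap x y t, segment_eq_image_lineMap ℝ x y ▸ ⟨t, ⟨ht₀, ht₁⟩, rfl⟩, ?_, ?_⟩
  · rw [dist_lineMap_left, Real.norm_of_nonneg ht₀]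
    calc t * dist x y ≤ t * (a + b) := by gcongr
      _ = a := hta
  · rw [dist_lineMap_right, Real.norm_of_nonneg (by linarith)]
    calc (1 - t) * dist x y ≤ (1 - t) * (a + b) := by gcongr
      _ = b := by linarith

theorem TotallyBounded.exists_pos_le_measure_ball {X : Type*} [PseudoMetricSpace X]
    [MeasurableSpace X] (μ : Measure X) {s : Set X} (hs : TotallyBounded s)
    (hμ : ∀ x ∈ s, ∀ r : ℝ, 0 < r → 0 < μ (ball x r)) {r : ℝ} (hr : 0 < r) :
    ∃ c : ℝ, 0 < c ∧ ∀ x ∈ s, ENNReal.ofReal c ≤ μ (ball x r) := by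
  -- Every `ball x r` with `x ∈ s` contains one of finitely many balls `ball i (r / 2)`, `i ∈ s`.
  obtain ⟨t, hts, ht, hst⟩ := finite_approx_of_totallyBounded hs (r / 2) (by positivity)
  set v := min 1 (ht.toFinset.inf fun i => μ (ball i (r / 2)))
  have hv_pos : 0 < v := lt_min one_pos <| (Finset.lt_inf_iff ENNReal.zero_lt_top).2
    fun i hi => hμ i (hts (ht.mem_toFinset.1 hi)) _ (by positivity)
  have hv_ne_top : v ≠ ∞ := ne_top_of_le_ne_top ENNReal.one_ne_top (min_le_left _ _)
  refine ⟨v.toReal, ENNReal.toReal_pos hv_pos.ne' hv_ne_top, fun x hx => ?_⟩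
  obtain ⟨i, hi, hxi⟩ := Set.mem_iUnion₂.1 (hst hx)
  calc ENNReal.ofReal v.toReal = v := ENNReal.ofReal_toReal hv_ne_top
    _ ≤ μ (ball i (r / 2)) := (min_le_right _ _).trans (Finset.inf_le (ht.mem_toFinset.2 hi))
    _ ≤ μ (ball x r) := measure_mono <| ball_subset_ball' <| by linarith [mem_ball'.1 hxi]

theorem stmt10_general (d : ℕ) (Φ : Measure (EuclideanSpace ℝ (Fin d)))
    (Eset : Set (EuclideanSpace ℝ (Fin d)))
    -- `Eset` is the support of `Φ`
    (hsupp : ∀ x ∈ Eset, ∀ r : ℝ, 0 < r → 0 < Φ (Metric.ball x r))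
    -- bounded and convex with nonempty interior
    (hbdd : Bornology.IsBounded Eset) (hconv : Convex ℝ Eset)
    (γ η : ℝ) (hγ : 0 < γ) (hγη : γ ≤ η) :
    ∃ c : ℝ, 0 < c ∧ ∀ x ∈ Eset, ∀ y ∈ Eset,
      Set.indicator (Metric.ball x (η + γ / 4)) (fun _ => ENNReal.ofReal c) y
        ≤ Φ (Metric.ball x η ∩ Metric.ball y γ) := by
  have hE : TotallyBounded Eset := hbdd.isCompact_closure.totallyBounded.subset subset_closure
  obtain ⟨c, hc, hc_le⟩ := hE.exists_pos_le_measure_ball Φ hsupp (r := γ / 4) (by positivity)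
  refine ⟨c, hc, fun x hx y hy => ?_⟩
  by_cases hxy : y ∈ ball x (η + γ / 4)
  · rw [Set.indicator_of_mem hxy]
    obtain ⟨m, hm, hmx, hmy⟩ := exists_mem_segment_dist_le (x := x) (y := y)
      (a := η - γ / 4) (b := 3 * γ / 4) (by linarith) (by positivity)
      (by rw [dist_comm]; linarith [mem_ball.1 hxy])
    calc ENNReal.ofReal c ≤ Φ (ball m (γ / 4)) := hc_le m (hconv.segment_subset hx hy hm)
      _ ≤ Φ (ball x η ∩ ball y γ) := measure_mono <| Set.subset_inter
          (ball_subset_ball' (by linarith)) (ball_subset_ball' (by linarith))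
  · rw [Set.indicator_of_notMem hxy]
    exact zero_le

/-- Let `E ⊂ ℝ^d` be a bounded convex set with nonempty interior
which is the support of a positive measure `Φ`. For `0 < γ ≤ η` there exists
`c > 0` such that for all `x, y ∈ E`,
`Φ(B(x,η) ∩ B(y,γ)) ≥ c · 1_{y ∈ B(x, η + γ/4)}`. -/
theorem stmt10 (d : ℕ) (Φ : Measure (EuclideanSpace ℝ (Fin d)))
    (Eset : Set (EuclideanSpace ℝ (Fin d)))
    -- `Eset` is the support of `Φ`
    (hclosed : IsClosed Eset) (hfull : Φ Esetᶜ = 0)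
    (hsupp : ∀ x ∈ Eset, ∀ r : ℝ, 0 < r → 0 < Φ (Metric.ball x r))
    -- bounded and convex with nonempty interior
    (hbdd : Bornology.IsBounded Eset) (hconv : Convex ℝ Eset)
    (hint : (interior Eset).Nonempty)
    (γ η : ℝ) (hγ : 0 < γ) (hγη : γ ≤ η) :
    ∃ c : ℝ, 0 < c ∧ ∀ x ∈ Eset, ∀ y ∈ Eset,
      Set.indicator (Metric.ball x (η + γ / 4)) (fun _ => ENNReal.ofReal c) y
        ≤ Φ (Metric.ball x η ∩ Metric.ball y γ) :=
  stmt10_general d Φ Eset hsupp hbdd hconv γ η hγ hγη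
end

section
/- Let x, y ∈ ℝ^d with ‖x − y‖ < η + γ/4 where 0 < γ ≤ η. Then there exists a point m lying strictly on the line segment between x and y such that the ball B(m, γ/4) is contained in B(x, η) ∩ B(y, γ). -/
/-! Put `m` on the segment at parameter `t`, so that `dist m x = t ‖x - y‖` and
`dist m y = (1 - t) ‖x - y‖`. The ball `B(m, r)` lies in `B(x, ρ) ∩ B(y, σ)` as soon as
`r + t ‖x - y‖ ≤ ρ` and `r + (1 - t) ‖x - y‖ ≤ σ`, and splitting `‖x - y‖ ≤ a + b` in the
ratio `a : b` with `a = ρ - r`, `b = σ - r` gives such a `t`. -/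

open Metric AffineMap

lemma exists_mem_Ioo_mul_le_and_one_sub_mul_le {D a b : ℝ} (ha : 0 < a) (hb : 0 < b)
    (hD : D ≤ a + b) : ∃ t ∈ Set.Ioo (0 : ℝ) 1, t * D ≤ a ∧ (1 - t) * D ≤ b := by
  have hab : 0 < a + b := add_pos ha hb
  refine ⟨a / (a + b), ⟨by positivity, (div_lt_one hab).2 (by linarith)⟩, ?_, ?_⟩
  · calc a / (a + b) * D ≤ a / (a + b) * (a + b) := by gcongr
      _ = a := div_mul_cancel₀ a hab.ne'
  · have h1 : 1 - a / (a + b) = b / (a + b) := by field_simp; ring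
    calc (1 - a / (a + b)) * D ≤ b / (a + b) * (a + b) := by rw [h1]; gcongr
      _ = b := div_mul_cancel₀ b hab.ne'

section AffineSpace

variable {V P : Type*} [SeminormedAddCommGroup V] [NormedSpace ℝ V] [PseudoMetricSpace P]
  [NormedAddTorsor V P]

lemma ball_lineMap_subset_ball_inter_ball {x y : P} {t r ρ σ : ℝ} (ht : t ∈ Set.Icc (0 : ℝ) 1)
    (hx : r + t * dist x y ≤ ρ) (hy : r + (1 - t) * dist x y ≤ σ) :
    ball (lineMap x y t) r ⊆ ball x ρ ∩ ball y σ := by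
  refine Set.subset_inter (ball_subset_ball' ?_) (ball_subset_ball' ?_)
  · rwa [dist_lineMap_left, Real.norm_of_nonneg ht.1]
  · rwa [dist_lineMap_right, Real.norm_of_nonneg (sub_nonneg.2 ht.2)]

lemma exists_ball_lineMap_subset_ball_inter_ball {x y : P} {r ρ σ : ℝ} (hρ : r < ρ)
    (hσ : r < σ) (hxy : dist x y ≤ (ρ - r) + (σ - r)) :
    ∃ t ∈ Set.Ioo (0 : ℝ) 1, ball (lineMap x y t) r ⊆ ball x ρ ∩ ball y σ := by
  obtain ⟨t, ht, hx, hy⟩ :=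
    exists_mem_Ioo_mul_le_and_one_sub_mul_le (sub_pos.2 hρ) (sub_pos.2 hσ) hxy
  exact ⟨t, ht, ball_lineMap_subset_ball_inter_ball (Set.Ioo_subset_Icc_self ht)
    (by linarith) (by linarith)⟩

end AffineSpace

/-- If `‖x − y‖ < η + γ/4` with `0 < γ ≤ η`, there is a point `m`
strictly on the segment between `x` and `y` with
`B(m, γ/4) ⊆ B(x, η) ∩ B(y, γ)`. -/
theorem stmt11 (d : ℕ) (x y : EuclideanSpace ℝ (Fin d))
    (γ η : ℝ) (hγ : 0 < γ) (hγη : γ ≤ η)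
    (hxy : dist x y < η + γ / 4) :
    ∃ t : ℝ, t ∈ Set.Ioo (0 : ℝ) 1 ∧
      Metric.ball ((1 - t) • x + t • y) (γ / 4)
        ⊆ Metric.ball x η ∩ Metric.ball y γ := by
  obtain ⟨t, ht, hball⟩ :=
    exists_ball_lineMap_subset_ball_inter_ball (x := x) (y := y) (r := γ / 4) (ρ := η) (σ := γ)
      (by linarith) (by linarith) (by linarith)
  exact ⟨t, ht, by rwa [← lineMap_apply_module]⟩
end

section
/- Let P be a transition kernel on ℝ^d and Φ a positive measure whose support E is bounded, convex, and has nonempty interior. Suppose there exists ε > 0 such that for all x ∈ E, P(x, dy) ≥ 1_{B(x,ε)}(y) Φ(dy). Then there exist C > 0 and n ≥ 1 such that for every x ∈ E and every measurable A ⊆ E, P^n(x, A) ≥ C Φ(A). -/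
/-!
Put `r = ε/3` and let `c > 0` bound `Φ(B(w, r))` from below for all `w ∈ E`; it exists by
compactness of `E` and the support condition. If `x, w ∈ E` with `|x - w| ≤ 2r`, then
`B(w, r) ⊆ B(x, ε)`, so one step of `P` from `x` lands in `E ∩ B(w, r)` with mass at least `c`.
By convexity one can walk from any `x ∈ E` towards any `z ∈ E` along the segment in such steps,
and induction on the number of steps gives `P^{k+1}(x, A) ≥ c^k Φ(A ∩ B(z, 2r))` whenever
`|x - z| ≤ (k + 1) r`. Choosing `k` with `(k + 1) r ≥ diam E` and summing over a finite cover of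
`E` by balls `B(z, 2r)` gives the bound with `C = c^k / #cover`.
-/

open MeasureTheory ProbabilityTheory
open scoped ENNReal

noncomputable def iterK {α : Type*} [MeasurableSpace α]
    (P : Kernel α α) : ℕ → Kernel α α
  | 0 => Kernel.id
  | n + 1 => (iterK P n).comp P

open Metric

namespace iterK

variable {α : Type*} [MeasurableSpace α] (P : Kernel α α)

@[simp]
theorem one : iterK P 1 = P :=
  Kernel.id_comp P

theorem succ_apply (n : ℕ) (x : α) {A : Set α} (hA : MeasurableSet A) :
    iterK P (n + 1) x A = ∫⁻ y, iterK P n y A ∂(P x) :=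
  Kernel.comp_apply' _ _ _ hA

end iterK

theorem Convex.exists_mem_dist_le_and_dist_le {X : Type*} [NormedAddCommGroup X]
    [NormedSpace ℝ X] {s : Set X} (hs : Convex ℝ s) {x z : X} (hx : x ∈ s) (hz : z ∈ s)
    {a b : ℝ} (ha : 0 ≤ a) (hb : 0 ≤ b) (h : dist x z ≤ a + b) :
    ∃ w ∈ s, dist x w ≤ a ∧ dist w z ≤ b := by
  by_cases hxz : dist x z ≤ a
  · exact ⟨z, hz, hxz, by simpa using hb⟩
  push Not at hxz
  have hd : 0 < dist x z := ha.trans_lt hxz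
  set θ := a / dist x z
  have hθ : θ ∈ Set.Icc (0 : ℝ) 1 := ⟨by positivity, (div_le_one hd).mpr hxz.le⟩
  refine ⟨AffineMap.lineMap x z θ, hs.lineMap_mem hx hz hθ, ?_, ?_⟩
  · rw [dist_comm, dist_lineMap_left, Real.norm_of_nonneg hθ.1, div_mul_cancel₀ _ hd.ne']
  · rw [dist_lineMap_right, Real.norm_of_nonneg (sub_nonneg.mpr hθ.2), sub_mul, one_mul,
      div_mul_cancel₀ _ hd.ne']
    linarith

theorem IsCompact.exists_pos_forall_le_measure_ball {X : Type*} [PseudoMetricSpace X]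
    [MeasurableSpace X] {μ : Measure X} {s : Set X} (hs : IsCompact s)
    (hμ : ∀ x ∈ s, ∀ r : ℝ, 0 < r → 0 < μ (ball x r)) {r : ℝ} (hr : 0 < r) :
    ∃ c : ℝ≥0∞, 0 < c ∧ c ≠ ∞ ∧ ∀ x ∈ s, c ≤ μ (ball x r) := by
  obtain ⟨t, hts, hcover⟩ := hs.elim_nhds_subcover (fun z => ball z (r / 2))
    fun z _ => ball_mem_nhds z (half_pos hr)
  -- `min 1` keeps `c` finite: `t` may be empty and the balls may have infinite measure
  refine ⟨min 1 (t.inf fun z => μ (ball z (r / 2))), ?_, ne_top_of_le_ne_top ENNReal.one_ne_top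
    (min_le_left _ _), fun x hx => ?_⟩
  · exact lt_min one_pos ((Finset.lt_inf_iff ENNReal.zero_lt_top).mpr
      fun z hz => hμ z (hts z hz) _ (half_pos hr))
  · obtain ⟨z, hz, hxz⟩ := Set.mem_iUnion₂.mp (hcover hx)
    refine (min_le_right _ _).trans ((Finset.inf_le hz).trans (measure_mono ?_))
    exact ball_subset_ball' (by rw [mem_ball, dist_comm] at hxz; linarith)

theorem measure_le_card_mul_of_subset_biUnion {X ι : Type*} [MeasurableSpace X]
    {μ : Measure X} {A : Set X} {t : Finset ι} {B : ι → Set X} (hA : A ⊆ ⋃ i ∈ t, B i)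
    {a q : ℝ≥0∞} (h : ∀ i ∈ t, a * μ (A ∩ B i) ≤ q) : a * μ A ≤ t.card * q := by
  have hsub : A ⊆ ⋃ i ∈ t, A ∩ B i := fun y hy => by
    obtain ⟨i, hi, hyi⟩ := Set.mem_iUnion₂.mp (hA hy)
    exact Set.mem_iUnion₂.mpr ⟨i, hi, hy, hyi⟩
  calc a * μ A ≤ a * ∑ i ∈ t, μ (A ∩ B i) :=
        mul_le_mul_right ((measure_mono hsub).trans (measure_biUnion_finset_le t _)) a
    _ = ∑ i ∈ t, a * μ (A ∩ B i) := Finset.mul_sum _ _ _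
    _ ≤ ∑ _i ∈ t, q := Finset.sum_le_sum h
    _ = t.card * q := by rw [Finset.sum_const, nsmul_eq_mul]

theorem Bornology.IsBounded.exists_nat_forall_dist_le_mul {X : Type*} [PseudoMetricSpace X]
    {s : Set X} (hs : Bornology.IsBounded s) {r : ℝ} (hr : 0 < r) :
    ∃ k : ℕ, ∀ x ∈ s, ∀ y ∈ s, dist x y ≤ (k + 1) * r := by
  obtain ⟨R, hR⟩ := isBounded_iff.mp hs
  obtain ⟨k, hk⟩ := exists_nat_ge (R / r)
  have hkR : R ≤ k * r := (div_le_iff₀ hr).mp hk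
  exact ⟨k, fun x hx y hy => by nlinarith [hR hx hy]⟩

section

variable {X : Type*} [MeasurableSpace X] {P : Kernel X X} {Φ : Measure X} {E : Set X}
  {ε r : ℝ} {c : ℝ≥0∞}

theorem mul_le_iterK_succ_of_le_on_ball [PseudoMetricSpace X] [OpensMeasurableSpace X]
    (hE : MeasurableSet E) (hfull : Φ Eᶜ = 0)
    (hminor : ∀ x ∈ E, ∀ A : Set X, MeasurableSet A → Φ (A ∩ ball x ε) ≤ P x A)
    (hc : ∀ w ∈ E, c ≤ Φ (ball w r)) (hrε : 3 * r ≤ ε) {x w : X} (hx : x ∈ E) (hw : w ∈ E)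
    (hxw : dist x w ≤ 2 * r) {n : ℕ} {A : Set X} (hA : MeasurableSet A) {a : ℝ≥0∞}
    (ha : ∀ y ∈ E ∩ ball w r, a ≤ iterK P n y A) :
    a * c ≤ iterK P (n + 1) x A := by
  have hSx : E ∩ ball w r ⊆ ball x ε := fun y hy => by
    have := hy.2; rw [mem_ball] at this ⊢; linarith [dist_triangle y w x, dist_comm x w]
  have hcS : c ≤ P x (E ∩ ball w r) :=
    calc c ≤ Φ (ball w r) := hc w hw
      _ = Φ (E ∩ ball w r ∩ ball x ε) := by
        rw [Set.inter_eq_left.mpr hSx, Set.inter_comm, measure_inter_conull hfull]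
      _ ≤ P x (E ∩ ball w r) := hminor x hx _ (hE.inter measurableSet_ball)
  calc a * c ≤ a * P x {y | a ≤ iterK P n y A} := by
        gcongr; exact hcS.trans (measure_mono ha)
    _ ≤ ∫⁻ y, iterK P n y A ∂(P x) := mul_meas_ge_le_lintegral (Kernel.measurable_coe _ hA) a
    _ = iterK P (n + 1) x A := (iterK.succ_apply P n x hA).symm

theorem pow_mul_measure_inter_ball_le_iterK [NormedAddCommGroup X] [NormedSpace ℝ X]
    [OpensMeasurableSpace X] (hE : MeasurableSet E) (hconv : Convex ℝ E) (hfull : Φ Eᶜ = 0)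
    (hminor : ∀ x ∈ E, ∀ A : Set X, MeasurableSet A → Φ (A ∩ ball x ε) ≤ P x A)
    (hc : ∀ w ∈ E, c ≤ Φ (ball w r)) (hrε : 3 * r ≤ ε) (k : ℕ) {x z : X} (hx : x ∈ E)
    (hz : z ∈ E) (hxz : dist x z ≤ (k + 1) * r) {A : Set X} (hA : MeasurableSet A) :
    c ^ k * Φ (A ∩ ball z (2 * r)) ≤ iterK P (k + 1) x A := by
  induction k generalizing x with
  | zero =>
    have hball : ball z (2 * r) ⊆ ball x ε :=
      ball_subset_ball' (by push_cast at hxz; linarith [dist_comm x z])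
    simpa using (measure_mono (Set.inter_subset_inter_right A hball)).trans (hminor x hx A hA)
  | succ k ih =>
    have hr : 0 ≤ r := by nlinarith [dist_nonneg (x := x) (y := z)]
    obtain ⟨w, hw, hxw, hwz⟩ :=
      hconv.exists_mem_dist_le_and_dist_le (a := 2 * r) (b := k * r) hx hz (by linarith)
        (mul_nonneg k.cast_nonneg hr) (by push_cast at hxz; linarith)
    rw [pow_succ, mul_right_comm]
    refine mul_le_iterK_succ_of_le_on_ball hE hfull hminor hc hrε hx hw hxw hA
      fun y ⟨hy, hyw⟩ => ih hy ?_
    rw [mem_ball] at hyw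
    linarith [dist_triangle y w z]

end

theorem stmt12_general (d : ℕ) (P : Kernel (EuclideanSpace ℝ (Fin d)) (EuclideanSpace ℝ (Fin d)))
    (Φ : Measure (EuclideanSpace ℝ (Fin d)))
    (Eset : Set (EuclideanSpace ℝ (Fin d)))
    -- `Eset` is the support of `Φ`
    (hclosed : IsClosed Eset) (hfull : Φ Esetᶜ = 0)
    (hsupp : ∀ x ∈ Eset, ∀ r : ℝ, 0 < r → 0 < Φ (Metric.ball x r))
    -- bounded and convex with nonempty interior
    (hbdd : Bornology.IsBounded Eset) (hconv : Convex ℝ Eset)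
    (hint : (interior Eset).Nonempty)
    -- minorization: `P(x, dy) ≥ 1_{B(x,ε)}(y) Φ(dy)` on `Eset`
    (ε : ℝ) (hε : 0 < ε)
    (hminor : ∀ x ∈ Eset, ∀ A : Set (EuclideanSpace ℝ (Fin d)), MeasurableSet A →
      Φ (A ∩ Metric.ball x ε) ≤ P x A) :
    ∃ C : ℝ, 0 < C ∧ ∃ n : ℕ, 1 ≤ n ∧
      ∀ x ∈ Eset, ∀ A : Set (EuclideanSpace ℝ (Fin d)), MeasurableSet A →
        A ⊆ Eset → ENNReal.ofReal C * Φ A ≤ iterK P n x A := by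
  set r := ε / 3 with hr_def
  have hr : 0 < r := by positivity
  have hcpt : IsCompact Eset := isCompact_of_isClosed_isBounded hclosed hbdd
  obtain ⟨c, hc0, hctop, hc⟩ := hcpt.exists_pos_forall_le_measure_ball hsupp hr
  obtain ⟨t, htE, hcover⟩ := hcpt.elim_nhds_subcover (fun z => ball z (2 * r))
    fun z _ => ball_mem_nhds z (by positivity)
  have ht : t.Nonempty := by
    obtain ⟨z, hz, -⟩ := Set.mem_iUnion₂.mp (hcover (interior_subset hint.some_mem))
    exact ⟨z, hz⟩
  obtain ⟨k, hk⟩ := hbdd.exists_nat_forall_dist_le_mul hr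
  have hC : c ^ k / t.card ≠ ∞ :=
    (ENNReal.div_lt_top (ENNReal.pow_ne_top hctop) (by simpa using ht.ne_empty)).ne
  refine ⟨(c ^ k / t.card).toReal, ENNReal.toReal_pos (ENNReal.div_pos
    (pow_ne_zero _ hc0.ne') (ENNReal.natCast_ne_top _)).ne' hC, k + 1, le_add_self,
    fun x hx A hA hAE => ?_⟩
  rw [ENNReal.ofReal_toReal hC, ← ENNReal.mul_div_right_comm]
  refine ENNReal.div_le_of_le_mul ?_
  rw [mul_comm _ (t.card : ℝ≥0∞)]
  exact measure_le_card_mul_of_subset_biUnion (hAE.trans hcover) fun z hz =>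
    pow_mul_measure_inter_ball_le_iterK hclosed.measurableSet hconv hfull hminor hc
      (by linarith) k hx (htE z hz) (hk x hx z (htE z hz)) hA

/-- uniform Doeblin condition. If `P(x,·) ≥ 1_{B(x,ε)} Φ` for all
`x` in the support `E` of `Φ`, with `E` bounded convex with nonempty interior,
then there exist `C > 0` and `n ≥ 1` with `P^n(x, A) ≥ C Φ(A)` for all `x ∈ E`
and measurable `A ⊆ E`. -/
theorem stmt12 (d : ℕ) (P : Kernel (EuclideanSpace ℝ (Fin d)) (EuclideanSpace ℝ (Fin d)))
    [IsMarkovKernel P]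
    (Φ : Measure (EuclideanSpace ℝ (Fin d)))
    (Eset : Set (EuclideanSpace ℝ (Fin d)))
    -- `Eset` is the support of `Φ`
    (hclosed : IsClosed Eset) (hfull : Φ Esetᶜ = 0)
    (hsupp : ∀ x ∈ Eset, ∀ r : ℝ, 0 < r → 0 < Φ (Metric.ball x r))
    -- bounded and convex with nonempty interior
    (hbdd : Bornology.IsBounded Eset) (hconv : Convex ℝ Eset)
    (hint : (interior Eset).Nonempty)
    -- minorization: `P(x, dy) ≥ 1_{B(x,ε)}(y) Φ(dy)` on `Eset`
    (ε : ℝ) (hε : 0 < ε)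
    (hminor : ∀ x ∈ Eset, ∀ A : Set (EuclideanSpace ℝ (Fin d)), MeasurableSet A →
      Φ (A ∩ Metric.ball x ε) ≤ P x A) :
    ∃ C : ℝ, 0 < C ∧ ∃ n : ℕ, 1 ≤ n ∧
      ∀ x ∈ Eset, ∀ A : Set (EuclideanSpace ℝ (Fin d)), MeasurableSet A →
        A ⊆ Eset → ENNReal.ofReal C * Φ A ≤ iterK P n x A :=
  stmt12_general d P Φ Eset hclosed hfull hsupp hbdd hconv hint ε hε hminor
end

section
/- Let F and G be two cumulative distribution functions with sup_t |F(t) − G(t)| ≤ γ for some 0 < γ < 1/4, and suppose G has a density g that is strictly positive on [F⁻(γ), F⁻(1−γ)] with inf_{u∈[γ,1−γ]} g(G⁻(u)) = b > 0. Then for every u ∈ [2γ, 1−2γ], |F⁻(u) − G⁻(u)| ≤ γ / b. -/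
open Filter MeasureTheory

/-- Generalized inverse (quantile function) of a CDF: `H⁻(u) = inf{x : H(x) ≥ u}`. -/
noncomputable def genInv (H : ℝ → ℝ) (u : ℝ) : ℝ :=
  sInf {x : ℝ | u ≤ H x}

/-! Let `A = G⁻(u)` and `B = F⁻(u)`; continuity of `G` gives `G A = u`. Strictly between `A` and `B`
both `F` and `G` stay within `γ` of `u`, so this interval lies in `[F⁻(γ), F⁻(1−γ)]`. There `g > 0`
makes `G` strictly increasing, so each point `z` is the quantile `G⁻(G z)` of a level
`G z ∈ [γ, 1−γ]`, whence `g z ≥ b`. Integrating `g` from `A` towards `B` then gives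
`b |B − A| ≤ γ`. -/

open Set

section Quantile

variable {H : ℝ → ℝ} {u x : ℝ}

lemma bddBelow_setOf_le_apply (hmono : Monotone H) (hbot : Tendsto H atBot (nhds 0))
    (hu : 0 < u) : BddBelow {x | u ≤ H x} := by
  obtain ⟨x₀, hx₀⟩ := (hbot.eventually (eventually_lt_nhds hu)).exists
  exact ⟨x₀, fun y hy => le_of_not_gt fun hyx => (hy.trans (hmono hyx.le)).not_gt hx₀⟩

lemma nonempty_setOf_le_apply (htop : Tendsto H atTop (nhds 1)) (hu : u < 1) :
    {x | u ≤ H x}.Nonempty :=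
  let ⟨x, hx⟩ := (htop.eventually (eventually_gt_nhds hu)).exists
  ⟨x, hx.le⟩

lemma genInv_le (hmono : Monotone H) (hbot : Tendsto H atBot (nhds 0)) (hu : 0 < u)
    (hx : u ≤ H x) : genInv H u ≤ x :=
  csInf_le (bddBelow_setOf_le_apply hmono hbot hu) hx

lemma apply_lt_of_lt_genInv (hmono : Monotone H) (hbot : Tendsto H atBot (nhds 0))
    (hu : 0 < u) (hx : x < genInv H u) : H x < u :=
  lt_of_not_ge fun h => (genInv_le hmono hbot hu h).not_gt hx

lemma le_genInv_of_apply_lt (hmono : Monotone H) (htop : Tendsto H atTop (nhds 1))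
    (hu : u < 1) (hx : H x < u) : x ≤ genInv H u :=
  le_csInf (nonempty_setOf_le_apply htop hu) fun _ hy =>
    le_of_not_gt fun hyx => (hy.trans (hmono hyx.le)).not_gt hx

lemma le_apply_of_genInv_lt (hmono : Monotone H) (htop : Tendsto H atTop (nhds 1))
    (hbot : Tendsto H atBot (nhds 0)) (hu₀ : 0 < u) (hu₁ : u < 1) (hx : genInv H u < x) :
    u ≤ H x :=
  let ⟨_, hy, hyx⟩ := (csInf_lt_iff (bddBelow_setOf_le_apply hmono hbot hu₀)
    (nonempty_setOf_le_apply htop hu₁)).1 hx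
  hy.trans (hmono hyx.le)

lemma apply_genInv_of_continuous (hmono : Monotone H) (htop : Tendsto H atTop (nhds 1))
    (hbot : Tendsto H atBot (nhds 0)) (hcont : Continuous H) (hu₀ : 0 < u) (hu₁ : u < 1) :
    H (genInv H u) = u := by
  have hlim := hcont.continuousAt (x := genInv H u)
  refine le_antisymm ?_ ?_
  · exact le_of_tendsto (hlim.mono_left (nhdsWithin_le_nhds (s := Iio _))) <|
      eventually_nhdsWithin_of_forall fun _ hx => (apply_lt_of_lt_genInv hmono hbot hu₀ hx).le
  · exact ge_of_tendsto (hlim.mono_left (nhdsWithin_le_nhds (s := Ioi _))) <|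
      eventually_nhdsWithin_of_forall fun _ hx =>
        le_apply_of_genInv_lt hmono htop hbot hu₀ hu₁ hx

lemma genInv_apply_eq (hmono : Monotone H) (hbot : Tendsto H atBot (nhds 0)) (hx : 0 < H x)
    (hstrict : ∀ y < x, H y < H x) : genInv H (H x) = x :=
  le_antisymm (genInv_le hmono hbot hx le_rfl)
    (le_csInf ⟨x, le_refl (H x)⟩ fun y hy => le_of_not_gt fun hyx => (hstrict y hyx).not_ge hy)

end Quantile

section Density

variable {G g : ℝ → ℝ}

lemma integrableOn_Iic_of_tendsto_atTop (hG : ∀ x, G x = ∫ t in Iic x, g t) {c : ℝ}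
    (htop : Tendsto G atTop (nhds c)) (hc : c ≠ 0) (x : ℝ) : IntegrableOn g (Iic x) := by
  by_contra hx
  have hzero : ∀ᶠ y in atTop, G y = 0 := (eventually_ge_atTop x).mono fun y hy => by
    rw [hG y]
    exact integral_undef fun h => hx (IntegrableOn.mono_set h (Iic_subset_Iic.2 hy))
  exact hc (tendsto_nhds_unique htop (tendsto_const_nhds.congr' (hzero.mono fun _ h => h.symm)))

lemma sub_eq_intervalIntegral (hint : ∀ x, IntegrableOn g (Iic x))
    (hG : ∀ x, G x = ∫ t in Iic x, g t) (p q : ℝ) : G q - G p = ∫ t in p..q, g t := by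
  rw [hG, hG, intervalIntegral.integral_Iic_sub_Iic (hint p) (hint q)]

lemma intervalIntegrable_of_integrableOn_Iic (hint : ∀ x, IntegrableOn g (Iic x)) (p q : ℝ) :
    IntervalIntegrable g volume p q :=
  ⟨(hint q).mono_set Ioc_subset_Iic_self, (hint p).mono_set Ioc_subset_Iic_self⟩

lemma continuous_of_density (hint : ∀ x, IntegrableOn g (Iic x))
    (hG : ∀ x, G x = ∫ t in Iic x, g t) : Continuous G := by
  rw [funext hG, continuous_iff_continuousAt]
  exact fun x => ((hint (x + 1)).continuousOn_Iic_primitive_Iic).continuousAt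
    (Iic_mem_nhds (lt_add_one x))

lemma mul_sub_le_sub_of_le_density (hint : ∀ x, IntegrableOn g (Iic x))
    (hG : ∀ x, G x = ∫ t in Iic x, g t) {b p q : ℝ} (hpq : p ≤ q)
    (hb : ∀ t ∈ Ioo p q, b ≤ g t) : b * (q - p) ≤ G q - G p := by
  rw [sub_eq_intervalIntegral hint hG, mul_comm, ← smul_eq_mul, ← intervalIntegral.integral_const]
  exact intervalIntegral.integral_mono_on_of_le_Ioo hpq intervalIntegrable_const
    (intervalIntegrable_of_integrableOn_Iic hint p q) hb

lemma apply_lt_apply_of_density_pos (hint : ∀ x, IntegrableOn g (Iic x))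
    (hG : ∀ x, G x = ∫ t in Iic x, g t) (hmono : Monotone G) {c y z : ℝ} (hcz : c < z)
    (hpos : ∀ t ∈ Ioo c z, 0 < g t) (hyz : y < z) : G y < G z := by
  have hcz' : max y c < z := max_lt hyz hcz
  have : 0 < G z - G (max y c) := by
    rw [sub_eq_intervalIntegral hint hG]
    exact intervalIntegral.intervalIntegral_pos_of_pos_on
      (intervalIntegrable_of_integrableOn_Iic hint _ _)
      (fun t ht => hpos t ⟨(le_max_right y c).trans_lt ht.1, ht.2⟩) hcz'
  linarith [hmono (le_max_left y c)]

lemma iInf_density_genInv_le (hint : ∀ x, IntegrableOn g (Iic x))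
    (hG : ∀ x, G x = ∫ t in Iic x, g t) (hmono : Monotone G) (hbot : Tendsto G atBot (nhds 0))
    (hg : ∀ x, 0 ≤ g x) {s : Set ℝ} {c z : ℝ} (hcz : c < z) (hpos : ∀ t ∈ Ioo c z, 0 < g t)
    (hGz : 0 < G z) (hzs : G z ∈ s) : ⨅ v : s, g (genInv G v) ≤ g z := by
  have hinv : genInv G (G z) = z := genInv_apply_eq hmono hbot hGz fun _ hy =>
    apply_lt_apply_of_density_pos hint hG hmono hcz hpos hy
  calc ⨅ v : s, g (genInv G v) ≤ g (genInv G (G z)) :=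
        ciInf_le ⟨0, forall_mem_range.2 fun _ => hg _⟩ (⟨G z, hzs⟩ : s)
    _ = g z := by rw [hinv]

end Density

section Comparison

variable {F G g : ℝ → ℝ} {γ b u a : ℝ}

lemma genInv_sub_le_div_of_le_density (hFmono : Monotone F)
    (hFbot : Tendsto F atBot (nhds 0)) (hint : ∀ x, IntegrableOn g (Iic x))
    (hG : ∀ x, G x = ∫ t in Iic x, g t) (hclose : ∀ t, |F t - G t| ≤ γ) (hb : 0 < b)
    (hu : 0 < u) (hGa : u ≤ G a) (hg : ∀ t ∈ Ioo a (genInv F u), b ≤ g t) :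
    genInv F u - a ≤ γ / b := by
  rw [sub_le_iff_le_add']
  refine le_of_forall_lt_imp_le_of_dense fun x hx => ?_
  rcases le_or_gt x a with hxa | hax
  · linarith [div_nonneg ((abs_nonneg _).trans (hclose 0)) hb.le]
  have hFx := apply_lt_of_lt_genInv hFmono hFbot hu hx
  have hGx := (abs_le.1 (hclose x)).1
  have hmul := mul_sub_le_sub_of_le_density hint hG hax.le fun t ht => hg t ⟨ht.1, ht.2.trans hx⟩
  rw [← sub_le_iff_le_add', le_div_iff₀ hb]
  linarith

lemma sub_genInv_le_div_of_le_density (hFmono : Monotone F)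
    (hFtop : Tendsto F atTop (nhds 1)) (hFbot : Tendsto F atBot (nhds 0))
    (hint : ∀ x, IntegrableOn g (Iic x)) (hG : ∀ x, G x = ∫ t in Iic x, g t)
    (hclose : ∀ t, |F t - G t| ≤ γ) (hb : 0 < b) (hu₀ : 0 < u) (hu₁ : u < 1) (hGa : G a ≤ u)
    (hg : ∀ t ∈ Ioo (genInv F u) a, b ≤ g t) : a - genInv F u ≤ γ / b := by
  rw [sub_le_comm]
  refine le_of_forall_gt_imp_ge_of_dense fun x hx => ?_
  rcases le_or_gt a x with hax | hxa
  · linarith [div_nonneg ((abs_nonneg _).trans (hclose 0)) hb.le]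
  have hFx := le_apply_of_genInv_lt hFmono hFtop hFbot hu₀ hu₁ hx
  have hGx := (abs_le.1 (hclose x)).2
  have hmul := mul_sub_le_sub_of_le_density hint hG hxa.le fun t ht => hg t ⟨hx.trans ht.1, ht.2⟩
  rw [sub_le_comm, le_div_iff₀ hb]
  linarith

end Comparison

theorem stmt15_general (F G g : ℝ → ℝ)
    (hFmono : Monotone F) (hGmono : Monotone G)
    (hFtop : Tendsto F atTop (nhds 1)) (hFbot : Tendsto F atBot (nhds 0))
    (hGtop : Tendsto G atTop (nhds 1)) (hGbot : Tendsto G atBot (nhds 0))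
    -- `g` is a density of `G`
    (hgnn : ∀ x, 0 ≤ g x)
    (hGdens : ∀ x, G x = ∫ t in Set.Iic x, g t)
    (γ : ℝ) (hγ0 : 0 < γ)
    (hclose : ∀ t, |F t - G t| ≤ γ)
    -- strict positivity of the density on `[F⁻(γ), F⁻(1−γ)]`
    (hgpos : ∀ x ∈ Set.Icc (genInv F γ) (genInv F (1 - γ)), 0 < g x)
    (b : ℝ) (hbdef : b = ⨅ u : Set.Icc γ (1 - γ), g (genInv G (u : ℝ)))
    (hb : 0 < b) :
    ∀ u ∈ Set.Icc (2 * γ) (1 - 2 * γ),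
      |genInv F u - genInv G u| ≤ γ / b := by
  intro u ⟨hu_ge, hu_le⟩
  have hu₀ : 0 < u := by linarith
  have hu₁ : u < 1 := by linarith
  have hint := integrableOn_Iic_of_tendsto_atTop hGdens hGtop one_ne_zero
  have hGA : G (genInv G u) = u := apply_genInv_of_continuous hGmono hGtop hGbot
    (continuous_of_density hint hGdens) hu₀ hu₁
  have hbg : ∀ p q, (∀ t ∈ Ioo p q, F t ∈ Ico (u - γ) (u + γ) ∧ G t ∈ Ico (u - γ) (u + γ)) →
      ∀ z ∈ Ioo p q, b ≤ g z := by
    intro p q hpq z hz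
    have hpos : ∀ t ∈ Ioo p z, 0 < g t := fun t ht => by
      have hFt := (hpq t ⟨ht.1, ht.2.trans hz.2⟩).1
      exact hgpos t ⟨genInv_le hFmono hFbot hγ0 (by linarith [hFt.1]),
        le_genInv_of_apply_lt hFmono hFtop (by linarith) (by linarith [hFt.2])⟩
    have hGz := (hpq z hz).2
    exact hbdef ▸ iInf_density_genInv_le hint hGdens hGmono hGbot hgnn hz.1 hpos
      (by linarith [hGz.1]) ⟨by linarith [hGz.1], by linarith [hGz.2]⟩
  rw [abs_sub_le_iff]
  refine ⟨genInv_sub_le_div_of_le_density hFmono hFbot hint hGdens hclose hb hu₀ hGA.ge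
    (hbg _ _ fun t ht => ?_), sub_genInv_le_div_of_le_density hFmono hFtop hFbot hint hGdens
    hclose hb hu₀ hu₁ hGA.le (hbg _ _ fun t ht => ?_)⟩
  · refine ⟨⟨?_, ?_⟩, ?_, ?_⟩ <;>
      linarith [apply_lt_of_lt_genInv hFmono hFbot hu₀ ht.2, hGA.ge.trans (hGmono ht.1.le),
        (abs_le.1 (hclose t)).1, (abs_le.1 (hclose t)).2]
  · refine ⟨⟨?_, ?_⟩, ?_, ?_⟩ <;>
      linarith [le_apply_of_genInv_lt hFmono hFtop hFbot hu₀ hu₁ ht.1,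
        apply_lt_of_lt_genInv hGmono hGbot hu₀ ht.2,
        (abs_le.1 (hclose t)).1, (abs_le.1 (hclose t)).2]

/-- If `F, G` are CDFs with `sup_t |F(t) − G(t)| ≤ γ`,
`0 < γ < 1/4`, and `G` has a density `g` strictly positive on
`[F⁻(γ), F⁻(1−γ)]` with `b = inf_{u∈[γ,1−γ]} g(G⁻(u)) > 0`, then for every
`u ∈ [2γ, 1−2γ]`, `|F⁻(u) − G⁻(u)| ≤ γ / b`. -/
theorem stmt15 (F G g : ℝ → ℝ)
    (hFmono : Monotone F) (hGmono : Monotone G)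
    (hFrc : ∀ x, ContinuousWithinAt F (Set.Ici x) x)
    (hFtop : Tendsto F atTop (nhds 1)) (hFbot : Tendsto F atBot (nhds 0))
    (hGtop : Tendsto G atTop (nhds 1)) (hGbot : Tendsto G atBot (nhds 0))
    -- `g` is a density of `G`
    (hgmeas : Measurable g) (hgnn : ∀ x, 0 ≤ g x)
    (hGdens : ∀ x, G x = ∫ t in Set.Iic x, g t)
    (γ : ℝ) (hγ0 : 0 < γ) (hγ : γ < 1 / 4)
    (hclose : ∀ t, |F t - G t| ≤ γ)
    -- strict positivity of the density on `[F⁻(γ), F⁻(1−γ)]`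
    (hgpos : ∀ x ∈ Set.Icc (genInv F γ) (genInv F (1 - γ)), 0 < g x)
    (b : ℝ) (hbdef : b = ⨅ u : Set.Icc γ (1 - γ), g (genInv G (u : ℝ)))
    (hb : 0 < b) :
    ∀ u ∈ Set.Icc (2 * γ) (1 - 2 * γ),
      |genInv F u - genInv G u| ≤ γ / b :=
  stmt15_general F G g hFmono hGmono hFtop hFbot hGtop hGbot hgnn hGdens γ hγ0 hclose hgpos b hbdef
    hb
end
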